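/- If u is a left unit or a right unit of the semigroup of tight endomaps of a complete lattice L under composition, then u is the identity map of L. Consequently, the quantale of tight endomaps of L is unital if and only if the identity of L is tight (equivalently, by Raney's theorem, if and only if L is completely distributive). -/

import Mathlib

/-!
The maps `stepMap a b`, equal to `⊥` on `Iic a` and to `b` elsewhere, are tight for every
complete lattice. A left unit `u` fixes `b = stepMap ⊥ b b`. A right unit `u` satisfies
`stepMap a ⊤ (u x) = stepMap a ⊤ x`, i.e. `u x ≤ a ↔ x ≤ a` for all `a`, so `u x = x`.
-/

/-- The Raney transform f^∨. -/
def raneV {L : Type*} [CompleteLattice L] (f : L → L) (x : L) : L :=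
  sSup (f '' {t | ¬ x ≤ t})

/-- The Raney transform f^∧. -/
def raneI {L : Type*} [CompleteLattice L] (f : L → L) (x : L) : L :=
  sInf (f '' {t | ¬ t ≤ x})

/-- A map is tight if f = (f^∧)^∨. -/
def Tight {L : Type*} [CompleteLattice L] (f : L → L) : Prop :=
  raneV (raneI f) = f

section Raney

variable {L : Type*} [CompleteLattice L]

theorem le_raneV {f : L → L} {x t : L} (h : ¬ x ≤ t) : f t ≤ raneV f x :=
  le_sSup ⟨t, h, rfl⟩

theorem raneV_le_iff {f : L → L} {x c : L} : raneV f x ≤ c ↔ ∀ t, ¬ x ≤ t → f t ≤ c := by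
  simp [raneV]

theorem raneI_le {f : L → L} {x t : L} (h : ¬ t ≤ x) : raneI f x ≤ f t :=
  sInf_le ⟨t, h, rfl⟩

theorem le_raneI_iff {f : L → L} {x c : L} : c ≤ raneI f x ↔ ∀ t, ¬ t ≤ x → c ≤ f t := by
  simp [raneI]

open Classical in
noncomputable def stepMap (a b : L) : L → L :=
  fun x => if x ≤ a then ⊥ else b

theorem stepMap_of_le {a b x : L} (h : x ≤ a) : stepMap a b x = ⊥ := if_pos h

theorem stepMap_of_not_le {a b x : L} (h : ¬ x ≤ a) : stepMap a b x = b := if_neg h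

theorem stepMap_bot_self (b : L) : stepMap ⊥ b b = b := by
  by_cases h : b ≤ ⊥
  · rw [stepMap_of_le h, le_bot_iff.mp h]
  · exact stepMap_of_not_le h

theorem stepMap_top_eq_bot_iff {a x : L} : stepMap a ⊤ x = ⊥ ↔ x ≤ a := by
  by_cases h : x ≤ a
  · simp [stepMap_of_le h, h]
  · rw [stepMap_of_not_le h]
    exact iff_of_false (fun htop => h (le_top.trans (htop.trans_le bot_le))) h

theorem raneI_stepMap_eq_bot {a b x : L} (h : ¬ a ≤ x) : raneI (stepMap a b) x = ⊥ :=
  le_bot_iff.mp ((raneI_le h).trans_eq (stepMap_of_le le_rfl))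

theorem le_raneI_stepMap_self (a b : L) : b ≤ raneI (stepMap a b) a :=
  le_raneI_iff.mpr fun _ ht => (stepMap_of_not_le ht).ge

theorem tight_stepMap (a b : L) : Tight (stepMap a b) := by
  funext x
  by_cases hxa : x ≤ a
  · rw [stepMap_of_le hxa, ← le_bot_iff, raneV_le_iff]
    exact fun t hxt => (raneI_stepMap_eq_bot fun hat => hxt (hxa.trans hat)).le
  · rw [stepMap_of_not_le hxa]
    refine le_antisymm (raneV_le_iff.mpr fun t hxt => ?_) ((le_raneI_stepMap_self a b).trans
      (le_raneV hxa))
    by_cases hat : a ≤ t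
    · exact (raneI_le hxt).trans_eq (stepMap_of_not_le hxa)
    · exact (raneI_stepMap_eq_bot hat).trans_le bot_le

theorem eq_id_of_forall_tight_comp_left {u : L → L} (h : ∀ f, Tight f → u ∘ f = f) :
    u = id := by
  funext b
  have hb := congrFun (h _ (tight_stepMap ⊥ b)) b
  rwa [Function.comp_apply, stepMap_bot_self] at hb

theorem eq_id_of_forall_tight_comp_right {u : L → L} (h : ∀ f, Tight f → f ∘ u = f) :
    u = id := by
  funext x
  show u x = x
  refine eq_of_forall_ge_iff fun a => ?_
  rw [← stepMap_top_eq_bot_iff, ← stepMap_top_eq_bot_iff (x := x)]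
  exact iff_of_eq (congrArg (· = ⊥) (congrFun (h _ (tight_stepMap a ⊤)) x))

end Raney

theorem stmt18 {L : Type*} [CompleteLattice L] :
    -- a left or right unit of the semigroup of tight maps is the identity:
    (∀ u : L → L, Tight u →
        ((∀ f : L → L, Tight f → u ∘ f = f) ∨
          (∀ f : L → L, Tight f → f ∘ u = f)) →
        u = id) ∧
    -- the quantale of tight maps is unital iff the identity is tight:
    ((∃ u : L → L, Tight u ∧
        ∀ f : L → L, Tight f → u ∘ f = f ∧ f ∘ u = f) ↔
      Tight (id : L → L)) := by
  refine ⟨fun u _ hunit => hunit.elim eq_id_of_forall_tight_comp_left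
    eq_id_of_forall_tight_comp_right, ⟨?_, fun hid => ⟨id, hid, fun _ _ => ⟨rfl, rfl⟩⟩⟩⟩
  rintro ⟨u, hu, hunit⟩
  rwa [← eq_id_of_forall_tight_comp_left fun f hf => (hunit f hf).1]
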